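/- For n ≥ 3, the group SL_n(ℚ) is normally generated by SL_n(ℤ): the normal closure in SL_n(ℚ) of the subgroup consisting of determinant-one matrices with integer entries (i.e., the image of the canonical embedding SL_n(ℤ) → SL_n(ℚ)) is all of SL_n(ℚ). -/

import Mathlib

/-!
Over a field, every element of `SLₙ` is a product of transvections and diagonal matrices with
`a, a⁻¹` in two positions (`diagonal_transvection_induction'`), and the latter are products of
six transvections, so `SLₙ` is generated by transvections. Conjugating the transvection
`1 + c E_ij` by the diagonal matrix with `a, a⁻¹` in positions `i` and `k`, for a third index `k`,
gives `1 + a c E_ij`. Hence a normal subgroup of `SLₙ(ℚ)` containing the integral transvections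
contains `1 + c E_ij` for every `c = c.num / c.den`, so it is everything.
-/

open Matrix

namespace Matrix.SpecialLinearGroup

variable {ι F : Type*} [Fintype ι] [DecidableEq ι]

theorem map_transvection {R S : Type*} [CommRing R] [CommRing S] (f : R →+* S) {i j : ι}
    (hij : i ≠ j) (b : R) : map f (transvection hij b) = transvection hij (f b) := by
  ext p q
  simp [transvection_coe, single_apply, one_apply, apply_ite f]

variable [Field F]

theorem diag2n_decompose {i j : ι} (hij : i ≠ j) (a : F) (ha : a ≠ 0) :
    diag2n hij a ha = transvection hij a * transvection hij.symm (-a⁻¹) * transvection hij a *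
      transvection hij (-1) * transvection hij.symm 1 * transvection hij (-1) := by
  ext p q
  simp [diag2n_coe, transvection_coe, mul_add, add_mul, diagonal_apply, single_apply, one_apply,
    hij, hij.symm, mul_inv_cancel₀ ha, inv_mul_cancel₀ ha]
  grind

theorem eq_top_of_forall_transvection_mem [Nontrivial ι] {H : Subgroup (SpecialLinearGroup ι F)}
    (hH : ∀ (i j : ι) (hij : i ≠ j) (c : F), transvection hij c ∈ H) : H = ⊤ := by
  refine (Subgroup.eq_top_iff' H).2 fun g ↦
    diagonal_transvection_induction' (· ∈ H) g (fun i j hij a ha ↦ ?_) hH fun _ _ ↦ mul_mem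
  rw [diag2n_decompose hij a ha]
  repeat' apply mul_mem
  all_goals exact hH _ _ _ _

theorem diag2n_mul_transvection {i j k : ι} (hij : i ≠ j) (hik : i ≠ k) (hjk : j ≠ k) (a : F)
    (ha : a ≠ 0) (c : F) :
    diag2n hik a ha * transvection hij c = transvection hij (a * c) * diag2n hik a ha := by
  ext p q
  simp [diag2n_coe, transvection_coe, mul_add, add_mul, single_apply, one_apply]
  grind

theorem transvection_mul_mem_of_normal {N : Subgroup (SpecialLinearGroup ι F)} (hN : N.Normal)
    {i j k : ι} (hij : i ≠ j) (hik : i ≠ k) (hjk : j ≠ k) {c : F}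
    (hc : transvection hij c ∈ N) (a : F) : transvection hij (a * c) ∈ N := by
  rcases eq_or_ne a 0 with rfl | ha
  · simp [N.one_mem]
  rw [eq_mul_inv_of_mul_eq (diag2n_mul_transvection hij hik hjk a ha c).symm]
  exact hN.conj_mem _ hc _

end Matrix.SpecialLinearGroup

/-- For `n ≥ 3`, the group `SLₙ(ℚ)` is normally generated by `SLₙ(ℤ)`. -/
theorem SL_n_Q_normally_generated_by_SL_n_Z
    (n : ℕ) (hn : 3 ≤ n) :
    Subgroup.normalClosure
        (Set.range (Matrix.SpecialLinearGroup.map (Int.castRingHom ℚ) :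
          Matrix.SpecialLinearGroup (Fin n) ℤ → Matrix.SpecialLinearGroup (Fin n) ℚ)) = ⊤ := by
  have : Nontrivial (Fin n) := Fin.nontrivial_iff_two_le.mpr (by omega)
  refine SpecialLinearGroup.eq_top_of_forall_transvection_mem fun i j hij c ↦ ?_
  obtain ⟨k, hki, hkj⟩ := Fin.exists_ne_and_ne_of_two_lt i j (by omega)
  rw [← Rat.num_div_den c, div_eq_inv_mul]
  refine SpecialLinearGroup.transvection_mul_mem_of_normal Subgroup.normalClosure_normal hij
    hki.symm hkj.symm ?_ _
  exact Subgroup.subset_normalClosure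
    ⟨SpecialLinearGroup.transvection hij c.num, SpecialLinearGroup.map_transvection _ hij c.num⟩
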